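/- For every integer q ≥ 1, the identity ∑_{k=1}^{q} 1/∏_{j=1, j≠k}^{q} (j²/k² − 1) = (−1)^{q+1} holds. -/

import Mathlib

/-!
With nodes `x_k = k²`, the `k`-th summand equals `(-1)^(q-1) x_k^(q-1) / ∏_{j ≠ k} (x_k - x_j)`.
Summing `x_k^(q-1) / ∏_{j ≠ k} (x_k - x_j)` over the nodes gives the coefficient of `X^(q-1)` in the
Lagrange interpolant of `X^(q-1)` at `q` distinct nodes, which is `X^(q-1)` itself, so this sum is `1`.
-/

open Finset Polynomial

variable {F ι : Type*} [Field F]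

theorem Lagrange.sum_pow_card_sub_one_div_prod_sub [DecidableEq ι] {s : Finset ι} {v : ι → F}
    (hvs : Set.InjOn v s) (hs : s.Nonempty) :
    ∑ i ∈ s, v i ^ (#s - 1) / ∏ j ∈ s.erase i, (v i - v j) = 1 := by
  have hdeg : ((X : F[X]) ^ (#s - 1)).degree < #s := by
    rw [degree_X_pow]
    exact_mod_cast Nat.sub_lt hs.card_pos one_pos
  simpa using (Lagrange.coeff_eq_sum hvs hdeg).symm

theorem inv_prod_div_sub_one {t : Finset ι} {w : ι → F} {x : F} (hx : x ≠ 0) :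
    (∏ j ∈ t, (w j / x - 1))⁻¹ = (-1) ^ #t * x ^ #t / ∏ j ∈ t, (x - w j) := by
  have hfactor : ∀ j ∈ t, w j / x - 1 = -x⁻¹ * (x - w j) := fun j _ => by
    field_simp
    ring
  rw [prod_congr rfl hfactor, prod_mul_distrib, prod_const, neg_pow, mul_inv, mul_inv, inv_pow,
    inv_inv, ← inv_pow, inv_neg_one, div_eq_mul_inv]

theorem sum_inv_prod_div_sub_one [DecidableEq ι] {s : Finset ι} {v : ι → F}
    (hvs : Set.InjOn v s) (hv : ∀ i ∈ s, v i ≠ 0) (hs : s.Nonempty) :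
    ∑ i ∈ s, (∏ j ∈ s.erase i, (v j / v i - 1))⁻¹ = (-1) ^ (#s - 1) := by
  calc ∑ i ∈ s, (∏ j ∈ s.erase i, (v j / v i - 1))⁻¹
      = ∑ i ∈ s, (-1) ^ (#s - 1) * (v i ^ (#s - 1) / ∏ j ∈ s.erase i, (v i - v j)) := by
        refine sum_congr rfl fun i hi => ?_
        rw [inv_prod_div_sub_one (hv i hi), card_erase_of_mem hi, mul_div_assoc]
    _ = (-1) ^ (#s - 1) := by
        rw [← mul_sum, Lagrange.sum_pow_card_sub_one_div_prod_sub hvs hs, mul_one]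

/-- For every integer `q ≥ 1`,
`∑_{k=1}^q 1/∏_{j=1, j≠k}^q (j²/k² − 1) = (−1)^(q+1)`. -/
theorem statement6 (q : ℕ) (hq : 1 ≤ q) :
    (∑ k ∈ Finset.Icc 1 q,
      (∏ j ∈ (Finset.Icc 1 q).erase k, ((j : ℝ) ^ 2 / (k : ℝ) ^ 2 - 1))⁻¹)
      = (-1 : ℝ) ^ (q + 1) := by
  have hinj : Set.InjOn (fun k : ℕ => (k : ℝ) ^ 2) (Icc 1 q) := fun a _ b _ hab =>
    Nat.pow_left_injective two_ne_zero (Nat.cast_injective (R := ℝ) (by push_cast; exact hab))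
  have hne : ∀ k ∈ Icc 1 q, (k : ℝ) ^ 2 ≠ 0 := fun k hk => by
    have : 1 ≤ k := (mem_Icc.1 hk).1
    positivity
  rw [sum_inv_prod_div_sub_one hinj hne ⟨1, by simpa using hq⟩, Nat.card_Icc,
    Nat.add_sub_cancel, show q + 1 = q - 1 + 2 by omega, pow_add, neg_one_sq, mul_one]
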